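/- Let (R,m) and (S,n) be one-dimensional Cohen-Macaulay local rings with common infinite residue field k, both with fractional canonical ideals K and L respectively, and neither R nor S a DVR. Let A = R ×_k S be the fiber product, with fractional canonical ideal X = (K × L) + A·ψ where ψ = (g₁, g₂), K:m = K + Rg₁, L:n = L + Sg₂. If R and S are both non-Gorenstein, then X² = X³ if and only if K² = K³ and L² = L³; if R is Gorenstein (K = R) and S non-Gorenstein, then X² = X³ if and only if L² = L³. -/

import Mathlib

/-!
Put `W = K : 𝔪 = K + R g₁` and `W' = L + S g₂`. As `R` is not a DVR, `𝔪 (R : 𝔪) ⊆ 𝔪`, so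
`R : 𝔪` is a ring containing `g₁` and `W` is an `R : 𝔪`-module; with `1 ∈ K` this gives
`W² = W K`. Although `X` is smaller than `W × W'`, products do not see the difference:
`(W × W')² = (W × W')(K × L) = X (K × L) ⊆ X²`, hence `Xⁿ = Wⁿ × W'ⁿ` for `n ≥ 2` and
`X² = X³` iff `W² = W³` and `W'² = W'³`.

If `K = R`, then `W = R : 𝔪` is a ring and `W² = W³`. Otherwise `W³ = W K²`, so `K² = K³`
gives `W² = W³` (using `g₁ K ⊆ W`). Conversely, `C = R : K` lies in `𝔪` because `K ≠ R` is
integral over `R`, so `C W ⊆ 𝔪` and `C W² ⊆ 𝔪 W ⊆ K`; if `W² = W³`, then `C W³ ⊆ K`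
means `C W² ⊆ K : W ⊆ K : K = R`, whence `C K³ ⊆ K`, and duality turns
`C = K : K² ⊆ K : K³` into `K³ ⊆ K²`.
-/

open IsLocalRing

/-- The length of a module, as the Krull dimension of its submodule lattice. -/
noncomputable def moduleLength (R M : Type*) [Ring R] [AddCommGroup M] [Module R M] : ℕ∞ :=
  (Order.krullDim (Submodule R M)).unbotD 0

/-- `K` is a fractional canonical ideal of `R` (inside a total quotient ring `Q`):
`R ⊆ K ⊆ \bar R` and `K ≅ K_R`, the latter expressed through the Herzog–Kunz
double-annihilator characterization of canonical fractional ideals. -/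
def IsFracCanonical (R Q : Type*) [CommRing R] [CommRing Q] [Algebra R Q]
    (K : Submodule R Q) : Prop :=
  K.FG ∧ (1 : Submodule R Q) ≤ K ∧
    K ≤ Subalgebra.toSubmodule (integralClosure R Q) ∧
    ∀ F : Submodule R Q, F.FG → (1 : Submodule R Q) ≤ F → K / (K / F) = F

/-- The conductor ideal `𝔠 = R : R[K]` of `R`. -/
noncomputable def condIdeal (R Q : Type*) [CommRing R] [CommRing Q] [Algebra R Q]
    (K : Submodule R Q) : Ideal R :=
  Submodule.comap (Algebra.linearMap R Q)
    ((1 : Submodule R Q) / (Subalgebra.toSubmodule (Algebra.adjoin R (K : Set Q))))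

set_option synthInstance.maxHeartbeats 1000000
set_option maxHeartbeats 1000000

section FiberProduct

variable (R S : Type*) [CommRing R] [CommRing S]

/-- The subring of `R × S` underlying a fiber product `R ×_k S` acts on
`Q(R) × Q(S)`. -/
noncomputable instance fpAlgebra (A : Subring (R × S)) :
    Algebra ↥A (FractionRing R × FractionRing S) :=
  RingHom.toAlgebra
    (((algebraMap R (FractionRing R)).prodMap (algebraMap S (FractionRing S))).comp
      A.subtype)

end FiberProduct

section OrderedMonoid

variable {α : Type*} [CommMonoid α] [PartialOrder α] [MulLeftMono α]

theorem pow_mul_le_pow_succ_of_mul_le {x p : α} (h : p * x ≤ x * x) (n : ℕ) :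
    p ^ n * x ≤ x ^ (n + 1) := by
  induction n with
  | zero => simp
  | succ n ih =>
    calc p ^ (n + 1) * x = p ^ n * (p * x) := by rw [pow_succ, mul_assoc]
      _ ≤ p ^ n * (x * x) := mul_le_mul_right h _
      _ = p ^ n * x * x := (mul_assoc ..).symm
      _ ≤ x ^ (n + 1) * x := mul_le_mul_left ih _
      _ = x ^ (n + 2) := (pow_succ ..).symm

theorem pow_eq_pow_of_le_of_mul_self_le {x p : α} (hxp : x ≤ p) (hp : p * p ≤ x * x) {n : ℕ}
    (hn : 2 ≤ n) : x ^ n = p ^ n := by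
  obtain ⟨n, rfl⟩ := Nat.exists_eq_add_of_le' hn
  refine le_antisymm (pow_le_pow_left' hxp _) ?_
  calc p ^ (n + 2) = p ^ n * (p * p) := by rw [pow_add, sq]
    _ ≤ p ^ n * (x * x) := mul_le_mul_right hp _
    _ = p ^ n * x * x := (mul_assoc ..).symm
    _ ≤ x ^ (n + 1) * x :=
      mul_le_mul_left (pow_mul_le_pow_succ_of_mul_le ((mul_le_mul_right hxp p).trans hp) n) _
    _ = x ^ (n + 2) := (pow_succ ..).symm

end OrderedMonoid

namespace Submodule

variable {R A : Type*} [CommSemiring R] [CommSemiring A] [Algebra R A]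

theorem div_div (I J K : Submodule R A) : I / J / K = I / (J * K) :=
  eq_of_forall_le_iff fun N => by
    rw [le_div_iff_mul_le, le_div_iff_mul_le, le_div_iff_mul_le, mul_assoc, mul_comm K J]

theorem div_one (I : Submodule R A) : I / 1 = I :=
  eq_of_forall_le_iff fun N => by rw [le_div_iff_mul_le, mul_one]

theorem div_le_div_left {I J J' : Submodule R A} (h : J ≤ J') : I / J' ≤ I / J :=
  le_div_iff_mul_le.2 <| (mul_le_mul_right h _).trans (le_div_iff_mul_le.1 le_rfl)

theorem one_div_mul_le_div (I J : Submodule R A) : 1 / J * I ≤ I / J :=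
  le_div_iff_mul_le.2 <| calc
    1 / J * I * J = I * (J * (1 / J)) := by ring
    _ ≤ I * 1 := mul_le_mul_right mul_one_div_le_one _
    _ = I := mul_one I

theorem one_div_mul_div_le {I J : Submodule R A} (h : J * (1 / J) ≤ J) :
    1 / J * (I / J) ≤ I / J :=
  le_div_iff_mul_le.2 <| calc
    1 / J * (I / J) * J = I / J * (J * (1 / J)) := by ring
    _ ≤ I / J * J := mul_le_mul_right h _
    _ ≤ I := le_div_iff_mul_le.1 le_rfl

end Submodule

theorem IsFracCanonical.div_self {R Q : Type*} [CommRing R] [CommRing Q] [Algebra R Q]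
    {K : Submodule R Q} (hK : IsFracCanonical R Q K) : K / K = 1 := by
  simpa [Submodule.div_one] using hK.2.2.2 1 ⟨{1}, by simp [Submodule.one_eq_span]⟩ le_rfl

theorem IsIntegral.isUnit_of_algebraMap_mul_eq_one {R Q : Type*} [CommRing R] [CommRing Q]
    [Algebra R Q] [FaithfulSMul R Q] {a : R} {k : Q} (hk : IsIntegral R k)
    (hak : algebraMap R Q a * k = 1) : IsUnit a := by
  obtain ⟨p, hp, hpk⟩ := hk
  let _ : Invertible k := invertibleOfLeftInverse k (algebraMap R Q a) hak
  -- `a` is a root of the reverse of `p`, whose constant coefficient is `1`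
  have hroot : p.reverse.eval a = 0 := by
    apply FaithfulSMul.algebraMap_injective R Q
    rw [← Polynomial.eval₂_at_apply, map_zero]
    exact (Polynomial.eval₂_reverse_eq_zero_iff _ k p).2 hpk
  obtain ⟨c, hc⟩ := Polynomial.sub_dvd_eval_sub a 0 p.reverse
  rw [hroot, ← Polynomial.coeff_zero_eq_eval_zero, Polynomial.coeff_zero_reverse,
    hp.leadingCoeff, sub_zero] at hc
  exact .of_mul_eq_one (-c) (by linear_combination hc)

section LocalRing

variable {R Q : Type*} [CommRing R] [IsLocalRing R] [CommRing Q] [Algebra R Q]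

local notation "𝔪" => Submodule.map (Algebra.linearMap R Q) (maximalIdeal R)

theorem IsLocalRing.exists_isDiscreteValuationRing_of_maximalIdeal_eq_span
    [IsNoetherianRing R] {t : R} (ht : t ∈ nonZeroDivisors R)
    (hm : maximalIdeal R = Ideal.span {t}) : ∃ _ : IsDomain R, IsDiscreteValuationRing R := by
  have factor : ∀ a : R, a ≠ 0 → ∃ n c, IsUnit c ∧ a = t ^ n * c := by
    intro a ha
    have hfin : FiniteMultiplicity t a := by
      obtain ⟨n, hn⟩ : ∃ n, a ∉ maximalIdeal R ^ n := by
        by_contra! h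
        have hbot := Ideal.iInf_pow_eq_bot_of_isLocalRing _ (maximalIdeal.isMaximal R).ne_top
        have : a ∈ ⨅ i, maximalIdeal R ^ i := Submodule.mem_iInf _ |>.2 h
        exact ha (by rwa [hbot, Submodule.mem_bot] at this)
      refine ⟨n, fun hdvd => hn ?_⟩
      rw [hm, Ideal.span_singleton_pow, Ideal.mem_span_singleton]
      exact (pow_dvd_pow t n.le_succ).trans hdvd
    obtain ⟨c, hc, hndvd⟩ := hfin.exists_eq_pow_mul_and_not_dvd
    refine ⟨_, c, ?_, hc⟩
    by_contra hcu
    exact hndvd (Ideal.mem_span_singleton.1 (hm ▸ (mem_maximalIdeal c).2 hcu))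
  have : IsDomain R := by
    refine @NoZeroDivisors.to_isDomain R _ _ ⟨fun {a b} hab => ?_⟩
    by_contra! h
    obtain ⟨n, c, hc, rfl⟩ := factor a h.1
    obtain ⟨n', c', hc', rfl⟩ := factor b h.2
    have : t ^ (n + n') * (c * c') = 0 := by rw [← hab]; ring
    exact (hc.mul hc').ne_zero ((mul_left_mem_nonZeroDivisors_eq_zero_iff
      (pow_mem ht _)).1 this)
  have hfield : ¬ IsField R := by
    rw [isField_iff_maximalIdeal_eq, hm, Ideal.span_singleton_eq_bot]
    exact nonZeroDivisors.ne_zero ht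
  have hprin : (maximalIdeal R).IsPrincipal := ⟨t, hm⟩
  exact ⟨this, ((IsDiscreteValuationRing.TFAE R hfield).out 4 0).1 hprin⟩

theorem map_maximalIdeal_mul_one_div_le [IsNoetherianRing R] [FaithfulSMul R Q]
    (hR : ¬ ∃ _ : IsDomain R, IsDiscreteValuationRing R) : 𝔪 * (1 / 𝔪) ≤ 𝔪 := by
  refine Submodule.mul_le.2 fun _ ⟨x, hx, hxx⟩ y hy => ?_
  subst hxx
  by_contra hxy
  -- otherwise `x * y` is a unit of `R`, so `x` generates `m` and is a nonzerodivisor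
  obtain ⟨s, hs⟩ := Submodule.mem_one.1 (hy _ ⟨x, hx, rfl⟩)
  have hsu : IsUnit s := by
    by_contra h
    exact hxy ⟨s, (mem_maximalIdeal s).2 h, by rw [Algebra.linearMap_apply, hs, mul_comm]⟩
  have hinj := FaithfulSMul.algebraMap_injective R Q
  have hm : maximalIdeal R = Ideal.span {x} := by
    refine le_antisymm (fun w hw => ?_) ((Ideal.span_singleton_le_iff_mem _).2 hx)
    obtain ⟨c, hc⟩ := Submodule.mem_one.1 (hy _ ⟨w, hw, rfl⟩)
    refine Ideal.mem_span_singleton.2 ((hsu.dvd_mul_left).1 ⟨c, hinj ?_⟩)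
    simp only [map_mul, hs, hc, Algebra.linearMap_apply]
    ring
  refine hR (IsLocalRing.exists_isDiscreteValuationRing_of_maximalIdeal_eq_span ?_ hm)
  refine mem_nonZeroDivisors_iff_right.2 fun a ha => hsu.mul_left_eq_zero.1 (hinj ?_)
  rw [map_mul, hs, map_zero, Algebra.linearMap_apply, mul_left_comm, ← map_mul, ha, map_zero,
    mul_zero]

theorem one_div_mul_self_le_map_maximalIdeal [FaithfulSMul R Q] {K : Submodule R Q}
    (hK1 : 1 ≤ K) (hKint : K ≤ Subalgebra.toSubmodule (integralClosure R Q)) (hK : K ≠ 1) :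
    1 / K * K ≤ 𝔪 := by
  refine Submodule.mul_le.2 fun c hc k hk => ?_
  by_contra hck
  obtain ⟨c₀, rfl⟩ := Submodule.mem_one.1 (by simpa using hc 1 (Submodule.one_le.1 hK1))
  obtain ⟨s, hs⟩ := Submodule.mem_one.1 (hc k hk)
  have hsu : IsUnit s := by
    by_contra h
    exact hck ⟨s, (mem_maximalIdeal s).2 h, hs⟩
  -- `c₀ / s` is an inverse in `Q` of the integral element `k`
  have hc₀ : IsUnit c₀ := by
    refine (IsUnit.mul_iff.1
      ((hKint hk).isUnit_of_algebraMap_mul_eq_one (a := ↑hsu.unit⁻¹ * c₀) ?_)).2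
    rw [map_mul, mul_assoc, ← hs, ← map_mul, IsUnit.val_inv_mul, map_one]
  refine hK (le_antisymm (fun z hz => ?_) hK1)
  obtain ⟨r, hr⟩ := Submodule.mem_one.1 (hc z hz)
  refine Submodule.mem_one.2 ⟨↑hc₀.unit⁻¹ * r, ?_⟩
  rw [map_mul, hr, ← mul_assoc, ← map_mul, IsUnit.val_inv_mul, map_one, one_mul]

theorem sup_span_mul_self_eq {K : Submodule R Q} {g : Q} (hK1 : 1 ≤ K) (hg : g ∈ 1 / 𝔪)
    (hKm : K / 𝔪 = K ⊔ Submodule.span R {g}) (h𝔪 : 𝔪 * (1 / 𝔪) ≤ 𝔪) :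
    (K ⊔ Submodule.span R {g}) * (K ⊔ Submodule.span R {g}) =
      (K ⊔ Submodule.span R {g}) * K := by
  set W := K ⊔ Submodule.span R {g}
  have hgT : Submodule.span R {g} ≤ 1 / 𝔪 := (Submodule.span_singleton_le_iff_mem _ _).2 hg
  have hTW : 1 / 𝔪 * W ≤ W := hKm ▸ Submodule.one_div_mul_div_le h𝔪
  refine le_antisymm ?_ (mul_le_mul_right le_sup_left W)
  calc W * W = W * K ⊔ W * Submodule.span R {g} := Submodule.mul_sup ..
    _ ≤ W * K := sup_le le_rfl <| calc
      W * Submodule.span R {g} ≤ 1 / 𝔪 * W := by rw [mul_comm]; exact mul_le_mul_left hgT W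
      _ ≤ W * 1 := (mul_one W).symm ▸ hTW
      _ ≤ W * K := mul_le_mul_right hK1 W

theorem one_sup_span_sq_eq_cube {g : Q} (hg : g ∈ 1 / 𝔪)
    (hKm : 1 / 𝔪 = 1 ⊔ Submodule.span R {g}) (h𝔪 : 𝔪 * (1 / 𝔪) ≤ 𝔪) :
    (1 ⊔ Submodule.span R {g}) ^ 2 = (1 ⊔ Submodule.span R {g}) ^ 3 := by
  have h := sup_span_mul_self_eq le_rfl hg hKm h𝔪
  rw [mul_one] at h
  simp only [pow_succ, pow_zero, one_mul, h]

theorem sup_span_sq_eq_cube_iff [FaithfulSMul R Q] {K : Submodule R Q}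
    (hK : IsFracCanonical R Q K) (hK1 : K ≠ 1) {g : Q} (hg : g ∈ 1 / 𝔪)
    (hKm : K / 𝔪 = K ⊔ Submodule.span R {g}) (h𝔪 : 𝔪 * (1 / 𝔪) ≤ 𝔪) :
    (K ⊔ Submodule.span R {g}) ^ 2 = (K ⊔ Submodule.span R {g}) ^ 3 ↔ K ^ 2 = K ^ 3 := by
  have hKK := hK.div_self
  obtain ⟨hKfg, hK1le, hKint, hdual⟩ := hK
  set G := Submodule.span R {g}
  set W := K ⊔ G
  have hgT : G ≤ 1 / 𝔪 := (Submodule.span_singleton_le_iff_mem _ _).2 hg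
  have hWW : W * W = W * K := sup_span_mul_self_eq hK1le hg hKm h𝔪
  simp only [pow_succ, pow_zero, one_mul]
  constructor
  · intro hW3
    set C := 1 / K
    have hCK : C * K ≤ 𝔪 := one_div_mul_self_le_map_maximalIdeal hK1le hKint hK1
    have hCW : C * W ≤ 𝔪 := by
      refine (Submodule.mul_sup C K G).trans_le (sup_le hCK ?_)
      calc C * G ≤ 𝔪 * (1 / 𝔪) := mul_le_mul' ((le_mul_of_one_le_right' hK1le).trans hCK) hgT
        _ ≤ 𝔪 := h𝔪
    have h𝔪W : 𝔪 * W ≤ K := by rw [mul_comm, ← Submodule.le_div_iff_mul_le, hKm]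
    have hCWW : C * (W * W) ≤ 1 := by
      refine le_trans ?_ (hKK ▸ Submodule.div_le_div_left (le_sup_left : K ≤ W))
      rw [Submodule.le_div_iff_mul_le]
      calc C * (W * W) * W = C * W * W := by rw [mul_assoc, ← hW3, mul_assoc]
        _ ≤ 𝔪 * W := mul_le_mul_left hCW W
        _ ≤ K := h𝔪W
    have hCK3 : C * (K * K * K) ≤ K := calc
      C * (K * K * K) = C * (K * K) * K := (mul_assoc ..).symm
      _ ≤ C * (W * W) * K :=
        mul_le_mul_left (mul_le_mul_right (mul_le_mul' le_sup_left le_sup_left) C) K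
      _ ≤ 1 * K := mul_le_mul_left hCWW K
      _ = K := one_mul K
    have hC : C = K / (K * K) := by rw [← Submodule.div_div, hKK]
    refine le_antisymm (le_mul_of_one_le_right' hK1le) ?_
    calc K * K * K = K / (K / (K * K * K)) :=
          (hdual _ ((hKfg.mul hKfg).mul hKfg) (one_le_mul (one_le_mul hK1le hK1le) hK1le)).symm
      _ ≤ K / (K / (K * K)) :=
          Submodule.div_le_div_left (hC ▸ Submodule.le_div_iff_mul_le.2 hCK3)
      _ = K * K := hdual _ (hKfg.mul hKfg) (one_le_mul hK1le hK1le)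
  · intro hK3
    have hGK : G * K ≤ W :=
      (mul_le_mul_left hgT K).trans (hKm ▸ Submodule.one_div_mul_le_div K 𝔪)
    refine le_antisymm (le_mul_of_one_le_right' (hK1le.trans le_sup_left)) ?_
    calc W * W * W = W * K * K := by rw [hWW, mul_right_comm, hWW]
      _ = K * K * K ⊔ G * K * K := by rw [Submodule.sup_mul, Submodule.sup_mul]
      _ ≤ W * K := sup_le (hK3 ▸ mul_le_mul_left le_sup_left K) (mul_le_mul_left hGK K)
      _ = W * W := hWW.symm

end LocalRing

section ProdSubmodule

variable {R S : Type*} [CommRing R] [CommRing S] (A : Subring (R × S))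

theorem fpAlgebra_smul_def (a : A) (x : FractionRing R × FractionRing S) :
    a • x = ((a : R × S).1 • x.1, (a : R × S).2 • x.2) := by
  rw [Algebra.smul_def, RingHom.algebraMap_toAlgebra, Algebra.smul_def, Algebra.smul_def]
  rfl

def prodSubmodule (U : Submodule R (FractionRing R)) (V : Submodule S (FractionRing S)) :
    Submodule A (FractionRing R × FractionRing S) where
  carrier := {p | p.1 ∈ U ∧ p.2 ∈ V}
  add_mem' hp hq := ⟨U.add_mem hp.1 hq.1, V.add_mem hp.2 hq.2⟩
  zero_mem' := ⟨U.zero_mem, V.zero_mem⟩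
  smul_mem' a p hp := by
    rw [fpAlgebra_smul_def]
    exact ⟨U.smul_mem _ hp.1, V.smul_mem _ hp.2⟩

variable {A}
variable {U U' : Submodule R (FractionRing R)} {V V' : Submodule S (FractionRing S)}

theorem prodSubmodule_le_prodSubmodule :
    prodSubmodule A U V ≤ prodSubmodule A U' V' ↔ U ≤ U' ∧ V ≤ V' := by
  refine ⟨fun h => ⟨fun u hu => (h (x := (u, 0)) ⟨hu, V.zero_mem⟩).1,
    fun v hv => (h (x := (0, v)) ⟨U.zero_mem, hv⟩).2⟩, fun h p hp => ⟨h.1 hp.1, h.2 hp.2⟩⟩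

theorem prodSubmodule_inj :
    prodSubmodule A U V = prodSubmodule A U' V' ↔ U = U' ∧ V = V' := by
  simp only [le_antisymm_iff, prodSubmodule_le_prodSubmodule]
  tauto

theorem span_prod_eq_prodSubmodule :
    Submodule.span A ((U : Set (FractionRing R)) ×ˢ (V : Set (FractionRing S))) =
      prodSubmodule A U V :=
  le_antisymm (Submodule.span_le.2 fun _ hp => hp) fun _ hp => Submodule.subset_span hp

theorem prodSubmodule_sup :
    prodSubmodule A U V ⊔ prodSubmodule A U' V' = prodSubmodule A (U ⊔ U') (V ⊔ V') := by
  refine le_antisymm (sup_le (prodSubmodule_le_prodSubmodule.2 ⟨le_sup_left, le_sup_left⟩)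
    (prodSubmodule_le_prodSubmodule.2 ⟨le_sup_right, le_sup_right⟩)) fun p hp => ?_
  obtain ⟨u, hu, u', hu', hp₁⟩ := Submodule.mem_sup.1 hp.1
  obtain ⟨v, hv, v', hv', hp₂⟩ := Submodule.mem_sup.1 hp.2
  exact Submodule.mem_sup.2 ⟨(u, v), ⟨hu, hv⟩, (u', v'), ⟨hu', hv'⟩, Prod.ext hp₁ hp₂⟩

theorem prodSubmodule_mul :
    prodSubmodule A U V * prodSubmodule A U' V' = prodSubmodule A (U * U') (V * V') := by
  refine le_antisymm (Submodule.mul_le.2 fun x hx y hy =>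
    ⟨Submodule.mul_mem_mul hx.1 hy.1, Submodule.mul_mem_mul hx.2 hy.2⟩) fun p hp => ?_
  -- the two coordinates are reached separately through products of elements `(u, 0)`, `(0, v)`
  have h₁ : ∀ z ∈ U * U', ((z, 0) : FractionRing R × FractionRing S) ∈
      prodSubmodule A U V * prodSubmodule A U' V' := fun z hz => by
    refine Submodule.mul_induction_on hz (fun u hu u' hu' => ?_) fun z z' hz hz' => ?_
    · simpa using Submodule.mul_mem_mul (show ((u, 0) : FractionRing R × FractionRing S) ∈
        prodSubmodule A U V from ⟨hu, V.zero_mem⟩)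
        (show ((u', 0) : FractionRing R × FractionRing S) ∈ prodSubmodule A U' V' from
          ⟨hu', V'.zero_mem⟩)
    · simpa using add_mem hz hz'
  have h₂ : ∀ z ∈ V * V', ((0, z) : FractionRing R × FractionRing S) ∈
      prodSubmodule A U V * prodSubmodule A U' V' := fun z hz => by
    refine Submodule.mul_induction_on hz (fun v hv v' hv' => ?_) fun z z' hz hz' => ?_
    · simpa using Submodule.mul_mem_mul (show ((0, v) : FractionRing R × FractionRing S) ∈
        prodSubmodule A U V from ⟨U.zero_mem, hv⟩)
        (show ((0, v') : FractionRing R × FractionRing S) ∈ prodSubmodule A U' V' from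
          ⟨U'.zero_mem, hv'⟩)
    · simpa using add_mem hz hz'
  simpa using add_mem (h₁ _ hp.1) (h₂ _ hp.2)

theorem prodSubmodule_mul_span_singleton (x : FractionRing R × FractionRing S) :
    prodSubmodule A U V * Submodule.span A {x} =
      prodSubmodule A (Submodule.span R {x.1} * U) (Submodule.span S {x.2} * V) := by
  refine le_antisymm (Submodule.mul_le.2 fun y hy z hz => ?_) fun z hz => ?_
  · obtain ⟨a, rfl⟩ := Submodule.mem_span_singleton.1 hz
    rw [mul_smul_comm]
    exact Submodule.smul_mem _ a ⟨Submodule.mem_span_singleton_mul.2 ⟨y.1, hy.1, mul_comm _ _⟩,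
      Submodule.mem_span_singleton_mul.2 ⟨y.2, hy.2, mul_comm _ _⟩⟩
  · obtain ⟨u, hu, hu₁⟩ := Submodule.mem_span_singleton_mul.1 hz.1
    obtain ⟨v, hv, hv₂⟩ := Submodule.mem_span_singleton_mul.1 hz.2
    rw [show z = (u, v) * x from Prod.ext (hu₁.symm.trans (mul_comm _ _))
      (hv₂.symm.trans (mul_comm _ _))]
    exact Submodule.mul_mem_mul (show (u, v) ∈ prodSubmodule A U V from ⟨hu, hv⟩)
      (Submodule.mem_span_singleton_self x)

theorem prodSubmodule_pow {n : ℕ} (hn : n ≠ 0) :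
    prodSubmodule A U V ^ n = prodSubmodule A (U ^ n) (V ^ n) := by
  obtain ⟨n, rfl⟩ := Nat.exists_eq_succ_of_ne_zero hn
  induction n with
  | zero => simp
  | succ n ih => rw [pow_succ, ih n.succ_ne_zero, prodSubmodule_mul, ← pow_succ, ← pow_succ]

theorem prodSubmodule_sup_span_sq_eq_cube_iff {K : Submodule R (FractionRing R)}
    {L : Submodule S (FractionRing S)} {g₁ : FractionRing R} {g₂ : FractionRing S}
    (hW₁ : (K ⊔ Submodule.span R {g₁}) * (K ⊔ Submodule.span R {g₁}) =
      (K ⊔ Submodule.span R {g₁}) * K)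
    (hW₂ : (L ⊔ Submodule.span S {g₂}) * (L ⊔ Submodule.span S {g₂}) =
      (L ⊔ Submodule.span S {g₂}) * L) :
    (prodSubmodule A K L ⊔ Submodule.span A {(g₁, g₂)}) ^ 2 =
        (prodSubmodule A K L ⊔ Submodule.span A {(g₁, g₂)}) ^ 3 ↔
      (K ⊔ Submodule.span R {g₁}) ^ 2 = (K ⊔ Submodule.span R {g₁}) ^ 3 ∧
        (L ⊔ Submodule.span S {g₂}) ^ 2 = (L ⊔ Submodule.span S {g₂}) ^ 3 := by
  set Y := prodSubmodule A K L
  set Z := Submodule.span A {((g₁, g₂) : FractionRing R × FractionRing S)}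
  set P := prodSubmodule A (K ⊔ Submodule.span R {g₁}) (L ⊔ Submodule.span S {g₂}) with hP
  have hXP : Y ⊔ Z ≤ P := sup_le (prodSubmodule_le_prodSubmodule.2 ⟨le_sup_left, le_sup_left⟩)
    ((Submodule.span_singleton_le_iff_mem _ _).2 ⟨Submodule.mem_sup_right
      (Submodule.mem_span_singleton_self g₁), Submodule.mem_sup_right
      (Submodule.mem_span_singleton_self g₂)⟩)
  -- `P² = P Y` on each side, and the part of `P` outside `Y` multiplies `Y` like `Z` does
  have hPP : P * P ≤ (Y ⊔ Z) * (Y ⊔ Z) := calc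
    P * P = P * Y := by rw [prodSubmodule_mul, prodSubmodule_mul, hW₁, hW₂]
    _ = (Y ⊔ Z) * Y := by
      rw [hP, ← prodSubmodule_sup, Submodule.sup_mul, Submodule.sup_mul, mul_comm Z Y,
        prodSubmodule_mul_span_singleton, prodSubmodule_mul, prodSubmodule_mul]
    _ ≤ (Y ⊔ Z) * (Y ⊔ Z) := mul_le_mul_right le_sup_left _
  rw [pow_eq_pow_of_le_of_mul_self_le hXP hPP le_rfl,
    pow_eq_pow_of_le_of_mul_self_le hXP hPP (by norm_num), hP, prodSubmodule_pow (by norm_num),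
    prodSubmodule_pow (by norm_num), prodSubmodule_inj]

end ProdSubmodule

section FiberProduct

variable (R S : Type*) [CommRing R] [CommRing S]

theorem fiber_product_canonical_square_cube
    [IsNoetherianRing R] [IsNoetherianRing S] [IsLocalRing R] [IsLocalRing S]
    (hRdvr : ¬ ∃ h : IsDomain R, @IsDiscreteValuationRing R _ h)
    (hSdvr : ¬ ∃ h : IsDomain S, @IsDiscreteValuationRing S _ h)
    (K : Submodule R (FractionRing R)) (hK : IsFracCanonical R (FractionRing R) K)
    (L : Submodule S (FractionRing S)) (hL : IsFracCanonical S (FractionRing S) L)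
    (g₁ : FractionRing R)
    (hg₁mem : g₁ ∈ (1 : Submodule R (FractionRing R)) /
      Submodule.map (Algebra.linearMap R (FractionRing R)) (maximalIdeal R))
    (hKm : K / Submodule.map (Algebra.linearMap R (FractionRing R)) (maximalIdeal R) =
      K ⊔ Submodule.span R {g₁})
    (g₂ : FractionRing S)
    (hg₂mem : g₂ ∈ (1 : Submodule S (FractionRing S)) /
      Submodule.map (Algebra.linearMap S (FractionRing S)) (maximalIdeal S))
    (hLm : L / Submodule.map (Algebra.linearMap S (FractionRing S)) (maximalIdeal S) =
      L ⊔ Submodule.span S {g₂})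
    (A : Subring (R × S))
    (X : Submodule ↥A (FractionRing R × FractionRing S))
    (hX : X = Submodule.span ↥A
      (((K : Set (FractionRing R)) ×ˢ (L : Set (FractionRing S))) ∪ {(g₁, g₂)})) :
    ((K ≠ 1 → L ≠ 1 → (X ^ 2 = X ^ 3 ↔ (K ^ 2 = K ^ 3 ∧ L ^ 2 = L ^ 3))) ∧
      (K = 1 → L ≠ 1 → (X ^ 2 = X ^ 3 ↔ L ^ 2 = L ^ 3))) := by
  have hm₁ := map_maximalIdeal_mul_one_div_le (Q := FractionRing R) hRdvr
  have hm₂ := map_maximalIdeal_mul_one_div_le (Q := FractionRing S) hSdvr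
  have hX23 : X ^ 2 = X ^ 3 ↔
      (K ⊔ Submodule.span R {g₁}) ^ 2 = (K ⊔ Submodule.span R {g₁}) ^ 3 ∧
        (L ⊔ Submodule.span S {g₂}) ^ 2 = (L ⊔ Submodule.span S {g₂}) ^ 3 := by
    rw [hX, Submodule.span_union, span_prod_eq_prodSubmodule]
    exact prodSubmodule_sup_span_sq_eq_cube_iff (sup_span_mul_self_eq hK.2.1 hg₁mem hKm hm₁)
      (sup_span_mul_self_eq hL.2.1 hg₂mem hLm hm₂)
  refine ⟨fun hK1 hL1 => ?_, fun hK1 hL1 => ?_⟩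
  · rw [hX23, sup_span_sq_eq_cube_iff hK hK1 hg₁mem hKm hm₁,
      sup_span_sq_eq_cube_iff hL hL1 hg₂mem hLm hm₂]
  · subst hK1
    rw [hX23, sup_span_sq_eq_cube_iff hL hL1 hg₂mem hLm hm₂,
      and_iff_right (one_sup_span_sq_eq_cube hg₁mem hKm hm₁)]

end FiberProduct
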